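/- arXiv:1506.00733 — 5 statements merged into one kernel-verified Lean document; each statement's English description precedes it below -/
import Mathlib

section
/- Let 0 < ρ < 1, 0 < δ < 1, and let ℓ be a positive integer with ℓ > (log(1/δ))/(ρ(1-ρ)). Then for all real θ, |ρ + (1-ρ)e^{2πiθ}|^{2ℓ} ≤ 1 - (1-δ)sin²(πθ). -/
/-!
Writing `x = πθ`, the squared modulus is `1 - a sin² x` with `a = 4ρ(1-ρ)`, so the left side is
`(1 - a s)^ℓ ≤ exp (-a s ℓ)` with `s = sin² x ∈ [0, 1]`. Convexity of `exp` in `s` bounds this by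
`1 - s + s exp (-a ℓ)`, and the hypothesis on `ℓ` makes `exp (-a ℓ) ≤ δ`.
-/

open Real Complex

lemma norm_sq_ofReal_add_one_sub_mul_exp (ρ θ : ℝ) :
    ‖(ρ : ℂ) + (1 - ρ) * exp (2 * π * I * θ)‖ ^ 2
      = 1 - 4 * ρ * (1 - ρ) * Real.sin (π * θ) ^ 2 := by
  have harg : 2 * (π : ℂ) * I * θ = ((2 * (π * θ) : ℝ) : ℂ) * I := by push_cast; ring
  rw [harg, exp_mul_I, Complex.sq_norm, normSq_apply]
  simp only [add_re, add_im, mul_re, mul_im, ofReal_re, ofReal_im, one_re, one_im, sub_re, sub_im,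
    cos_ofReal_re, cos_ofReal_im, sin_ofReal_re, sin_ofReal_im, I_re, I_im]
  rw [Real.cos_two_mul, Real.sin_two_mul, Real.cos_sq']
  linear_combination (4 * (1 - ρ) ^ 2 * Real.sin (π * θ) ^ 2) * Real.sin_sq_add_cos_sq (π * θ)

lemma one_sub_pow_le_exp_neg_mul {x : ℝ} (hx : x ≤ 1) (n : ℕ) :
    (1 - x) ^ n ≤ Real.exp (-(x * n)) := by
  calc (1 - x) ^ n ≤ Real.exp (-x) ^ n :=
        pow_le_pow_left₀ (by linarith) (by linarith [Real.add_one_le_exp (-x)]) n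
    _ = Real.exp (-(x * n)) := by rw [← Real.exp_nat_mul]; ring_nf

lemma exp_mul_le_one_sub_add_mul_exp {s : ℝ} (hs0 : 0 ≤ s) (hs1 : s ≤ 1) (y : ℝ) :
    Real.exp (s * y) ≤ 1 - s + s * Real.exp y := by
  have := convexOn_exp.2 (Set.mem_univ 0) (Set.mem_univ y) (sub_nonneg.2 hs1) hs0 (by ring)
  simpa only [smul_eq_mul, mul_zero, zero_add, Real.exp_zero, mul_one] using this

lemma exp_neg_le_of_log_one_div_le {δ y : ℝ} (hδ : 0 < δ) (h : Real.log (1 / δ) ≤ y) :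
    Real.exp (-y) ≤ δ := by
  rw [one_div, Real.log_inv] at h
  rw [← Real.le_log_iff_exp_le hδ]
  linarith

theorem stmt_1_general (ρ δ : ℝ) (hρ : 0 < ρ) (hρ1 : ρ < 1) (hδ : 0 < δ)
    (ℓ : ℕ) (hℓ : Real.log (1 / δ) / (ρ * (1 - ρ)) < ℓ) (θ : ℝ) :
    ‖(ρ : ℂ) + (1 - ρ) * Complex.exp (2 * Real.pi * Complex.I * θ)‖ ^ (2 * ℓ)
      ≤ 1 - (1 - δ) * Real.sin (Real.pi * θ) ^ 2 := by
  set s := Real.sin (π * θ) ^ 2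
  have hs0 : 0 ≤ s := sq_nonneg _
  have hs1 : s ≤ 1 := Real.sin_sq_le_one _
  have hρρ : 0 < ρ * (1 - ρ) := mul_pos hρ (sub_pos.2 hρ1)
  have hρρ4 : 4 * ρ * (1 - ρ) ≤ 1 := by nlinarith [sq_nonneg (2 * ρ - 1)]
  have hlog : Real.log (1 / δ) ≤ 4 * ρ * (1 - ρ) * ℓ := by
    rw [div_lt_iff₀ hρρ] at hℓ
    nlinarith [mul_nonneg hρρ.le (Nat.cast_nonneg ℓ : (0 : ℝ) ≤ ℓ)]
  calc _ = (1 - 4 * ρ * (1 - ρ) * s) ^ ℓ := by rw [pow_mul, norm_sq_ofReal_add_one_sub_mul_exp]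
    _ ≤ Real.exp (s * -(4 * ρ * (1 - ρ) * ℓ)) := by
        convert one_sub_pow_le_exp_neg_mul (x := 4 * ρ * (1 - ρ) * s) (by nlinarith) ℓ
          using 2; ring
    _ ≤ 1 - s + s * Real.exp (-(4 * ρ * (1 - ρ) * ℓ)) := exp_mul_le_one_sub_add_mul_exp hs0 hs1 _
    _ ≤ 1 - s + s * δ := by gcongr; exact exp_neg_le_of_log_one_div_le hδ hlog
    _ = 1 - (1 - δ) * s := by ring

theorem stmt_1 (ρ δ : ℝ) (hρ : 0 < ρ) (hρ1 : ρ < 1) (hδ : 0 < δ) (hδ1 : δ < 1)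
    (ℓ : ℕ) (hℓpos : 0 < ℓ) (hℓ : Real.log (1 / δ) / (ρ * (1 - ρ)) < ℓ) (θ : ℝ) :
    ‖(ρ : ℂ) + (1 - ρ) * Complex.exp (2 * Real.pi * Complex.I * θ)‖ ^ (2 * ℓ)
      ≤ 1 - (1 - δ) * Real.sin (Real.pi * θ) ^ 2 :=
  stmt_1_general ρ δ hρ hρ1 hδ ℓ hℓ θ
end

section
/- Let 0 < δ < 1 and let h be a positive integer. Then ∫₀¹ ∏_{j=0}^{h-1} (1 + δ - (1-δ)sin²(π·2ʲ·x)) dx = ((1+3δ)/2)^h. -/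
open Real

/-! Splitting off the factor `j = 0`, the integrand is `a(x) · P(2x)` with `P` the same product
with one factor fewer, which is 1-periodic, and `a(x) = 1 + δ - (1 - δ) sin²(πx)`.
Cutting `[0, 1]` at `1/2` and shifting the upper half gives `∫₀^{1/2} (a(x) + a(x + 1/2)) P(2x) dx`,
and `a(x) + a(x + 1/2) = 1 + 3δ` because `sin²(πx) + cos²(πx) = 1`; hence each factor contributes
`(1 + 3δ)/2` and induction on `h` finishes. -/

theorem intervalIntegral_mul_comp_two_mul_of_add_half {a Q : ℝ → ℝ} {c : ℝ}
    (ha : Continuous a) (hQ : Continuous Q) (hQ1 : Function.Periodic Q 1)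
    (hac : ∀ x, a x + a (x + 1 / 2) = c) :
    ∫ x in (0:ℝ)..1, a x * Q (2 * x) = c / 2 * ∫ x in (0:ℝ)..1, Q x := by
  have hint : ∀ u v : ℝ, IntervalIntegrable (fun x => a x * Q (2 * x)) MeasureTheory.volume u v :=
    fun u v => (ha.mul (hQ.comp (continuous_const.mul continuous_id))).intervalIntegrable u v
  have hshift : ∫ x in (1/2:ℝ)..1, a x * Q (2 * x)
      = ∫ x in (0:ℝ)..1/2, a (x + 1 / 2) * Q (2 * x) := by
    symm
    calc ∫ x in (0:ℝ)..1/2, a (x + 1 / 2) * Q (2 * x)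
        = ∫ x in (0:ℝ)..1/2, a (x + 1 / 2) * Q (2 * (x + 1 / 2)) :=
          intervalIntegral.integral_congr fun x _ => by
            rw [mul_add, mul_one_div_cancel two_ne_zero, hQ1]
      _ = ∫ x in (1/2:ℝ)..1, a x * Q (2 * x) := by
          rw [intervalIntegral.integral_comp_add_right (fun x => a x * Q (2 * x))]
          norm_num
  calc ∫ x in (0:ℝ)..1, a x * Q (2 * x)
      = (∫ x in (0:ℝ)..1/2, a x * Q (2 * x)) + ∫ x in (1/2:ℝ)..1, a x * Q (2 * x) :=
        (intervalIntegral.integral_add_adjacent_intervals (hint _ _) (hint _ _)).symm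
    _ = ∫ x in (0:ℝ)..1/2, c * Q (2 * x) := by
        rw [hshift, ← intervalIntegral.integral_add (hint _ _)]
        · simp_rw [← add_mul, hac]
        · exact ((ha.comp (continuous_add_const _)).mul
            (hQ.comp (continuous_const.mul continuous_id))).intervalIntegrable _ _
    _ = c / 2 * ∫ x in (0:ℝ)..1, Q x := by
        rw [intervalIntegral.integral_const_mul, intervalIntegral.integral_comp_mul_left _ two_ne_zero]
        rw [mul_zero, mul_one_div_cancel two_ne_zero, smul_eq_mul]
        ring

theorem sin_sq_pi_mul_periodic : Function.Periodic (fun x => sin (π * x) ^ 2) 1 := by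
  intro x
  simp only [mul_add, mul_one, sin_add_pi, neg_sq]

theorem sin_sq_pi_mul_add_sin_sq_pi_mul_add_half (x : ℝ) :
    sin (π * x) ^ 2 + sin (π * (x + 1 / 2)) ^ 2 = 1 := by
  rw [mul_add, mul_one_div, sin_add_pi_div_two, sin_sq_add_cos_sq]

theorem periodic_prod_sin_sq_pi_mul_two_pow (δ : ℝ) (n : ℕ) :
    Function.Periodic (fun x => ∏ j ∈ Finset.range n,
      (1 + δ - (1 - δ) * sin (π * 2 ^ j * x) ^ 2)) 1 := by
  intro x
  refine Finset.prod_congr rfl fun j _ => ?_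
  have := sin_sq_pi_mul_periodic.nat_mul (2 ^ j) (2 ^ j * x)
  push_cast [mul_one] at this
  rw [mul_assoc, mul_add, mul_one, this, mul_assoc]

theorem stmt_4_general (δ : ℝ) (h : ℕ) :
    ∫ x in (0:ℝ)..1, ∏ j ∈ Finset.range h,
        (1 + δ - (1 - δ) * Real.sin (Real.pi * 2 ^ j * x) ^ 2)
      = ((1 + 3 * δ) / 2) ^ h := by
  induction h with
  | zero => simp
  | succ n ih =>
    have hrec : ∀ x, ∏ j ∈ Finset.range (n + 1), (1 + δ - (1 - δ) * sin (π * 2 ^ j * x) ^ 2)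
        = (1 + δ - (1 - δ) * sin (π * x) ^ 2) *
          ∏ j ∈ Finset.range n, (1 + δ - (1 - δ) * sin (π * 2 ^ j * (2 * x)) ^ 2) := by
      intro x
      rw [Finset.prod_range_succ', mul_comm]
      simp only [pow_succ, pow_zero, mul_one]
      congr 1
      exact Finset.prod_congr rfl fun j _ => by ring_nf
    simp_rw [hrec]
    rw [intervalIntegral_mul_comp_two_mul_of_add_half (c := 1 + 3 * δ) (by fun_prop)
      (continuous_finsetProd _ fun j _ => by fun_prop) (periodic_prod_sin_sq_pi_mul_two_pow δ n),
      ih, pow_succ]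
    · ring
    · intro x
      linear_combination (δ - 1) * sin_sq_pi_mul_add_sin_sq_pi_mul_add_half x

theorem stmt_4 (δ : ℝ) (hδ : 0 < δ) (hδ1 : δ < 1) (h : ℕ) (hh : 0 < h) :
    ∫ x in (0:ℝ)..1, ∏ j ∈ Finset.range h,
        (1 + δ - (1 - δ) * Real.sin (Real.pi * 2 ^ j * x) ^ 2)
      = ((1 + 3 * δ) / 2) ^ h :=
  stmt_4_general δ h
end

section
/- Let q ≥ 3 be an odd integer and λ an integer with λ ≢ 0 (mod q). Then there exists an integer j with 0 ≤ j ≤ log₂(q) such that the distance from λ·2ʲ/q to the nearest integer is at least 1/4 (in particular sin²(π λ 2ʲ / q) ≥ 1/2). -/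
/-!
Write `‖x‖ = |x - round x|` for the distance to the nearest integer. Doubling doubles `‖x‖` as
long as `‖x‖ ≤ 1/4`, and `‖l / q‖ ≥ 1 / q`. So if `‖2 ^ j * l / q‖ < 1/4` for every
`j ≤ N = ⌊log₂ q⌋`, then `‖2 ^ N * l / q‖ ≥ 2 ^ N / q > 1/2`, which is impossible. The sine bound
follows from `sin² (π y) = (1 - cos (2 π ‖y‖)) / 2`.
-/

theorem abs_two_mul_sub_round {x : ℝ} (hx : |x - round x| ≤ 1 / 4) :
    |2 * x - round (2 * x)| = 2 * |x - round x| := by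
  have hdouble : |2 * x - ((2 * round x : ℤ) : ℝ)| = 2 * |x - round x| := by
    push_cast; rw [← mul_sub, abs_mul, abs_two]
  refine le_antisymm (hdouble ▸ round_le _ _) ?_
  rcases eq_or_ne (round (2 * x)) (2 * round x) with h | h
  · rw [h, hdouble]
  · -- otherwise `round (2 * x)` is at distance at least `1 - 2 * |x - round x|` from `2 * x`
    have hgap : (1 : ℝ) ≤ |((round (2 * x) - 2 * round x : ℤ) : ℝ)| := by
      exact_mod_cast Int.one_le_abs (sub_ne_zero.mpr h)
    have := abs_sub_le ((round (2 * x) : ℤ) : ℝ) (2 * x) ((2 * round x : ℤ) : ℝ)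
    rw [abs_sub_comm _ (2 * x), hdouble, ← Int.cast_sub] at this
    linarith

theorem pow_two_mul_abs_sub_round_le {x : ℝ} {n : ℕ}
    (hsmall : ∀ i < n, |2 ^ i * x - round (2 ^ i * x)| < 1 / 4) :
    2 ^ n * |x - round x| ≤ |2 ^ n * x - round (2 ^ n * x)| := by
  induction n with
  | zero => simp
  | succ n ih =>
    have hn := hsmall n n.lt_succ_self
    calc 2 ^ (n + 1) * |x - round x| = 2 * (2 ^ n * |x - round x|) := by ring
      _ ≤ 2 * |2 ^ n * x - round (2 ^ n * x)| := by
        gcongr; exact ih fun i hi => hsmall i (hi.trans n.lt_succ_self)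
      _ = |2 ^ (n + 1) * x - round (2 ^ (n + 1) * x)| := by
        rw [← abs_two_mul_sub_round hn.le, pow_succ', mul_assoc]

theorem exists_le_abs_pow_two_mul_sub_round {x : ℝ} {n : ℕ}
    (hx : 1 / 2 < 2 ^ n * |x - round x|) :
    ∃ j ≤ n, 1 / 4 ≤ |2 ^ j * x - round (2 ^ j * x)| := by
  by_contra! hsmall
  have := pow_two_mul_abs_sub_round_le fun i hi => hsmall i hi.le
  linarith [abs_sub_round (2 ^ n * x)]

theorem one_div_le_abs_div_sub_round {q l : ℤ} (hq : 0 < q) (hl : ¬ q ∣ l) :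
    1 / (q : ℝ) ≤ |(l / q : ℝ) - round (l / q : ℝ)| := by
  have hqR : (0 : ℝ) < q := by exact_mod_cast hq
  have hne : l - q * round (l / q : ℝ) ≠ 0 := fun h => hl ⟨_, sub_eq_zero.mp h⟩
  have hone : (1 : ℝ) ≤ |((l - q * round (l / q : ℝ) : ℤ) : ℝ)| := by
    exact_mod_cast Int.one_le_abs hne
  push_cast at hone
  rw [show (l / q : ℝ) - round (l / q : ℝ) = (l - q * round (l / q : ℝ)) / q by field_simp,
    abs_div, abs_of_pos hqR]
  gcongr

theorem half_le_sin_pi_mul_sq {y : ℝ} (hy : 1 / 4 ≤ |y - round y|) :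
    1 / 2 ≤ Real.sin (Real.pi * y) ^ 2 := by
  set t := y - round y
  have hsin : Real.sin (Real.pi * y) ^ 2 = Real.sin (Real.pi * t) ^ 2 := by
    rw [show Real.pi * t = Real.pi * y - round y * Real.pi by ring, Real.sin_sub_int_mul_pi,
      mul_pow, ← sq_abs ((-1 : ℝ) ^ round y), abs_neg_one_zpow, one_pow, one_mul]
  have hcos : Real.cos (2 * Real.pi * |t|) ≤ 0 :=
    Real.cos_nonpos_of_pi_div_two_le_of_le (by nlinarith [Real.pi_pos])
      (by nlinarith [Real.pi_pos, abs_sub_round y])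
  rw [hsin, Real.sin_sq_eq_half_sub, ← Real.cos_abs, abs_mul, abs_mul, abs_two,
    abs_of_pos Real.pi_pos, ← mul_assoc]
  linarith

theorem stmt_7_general (q : ℕ) (hq : 3 ≤ q) (l : ℤ) (hl : ¬ ((q : ℤ) ∣ l)) :
    ∃ j : ℕ, (j : ℝ) ≤ Real.logb 2 q ∧
      (∀ n : ℤ, (1 / 4 : ℝ) ≤ |(l : ℝ) * 2 ^ j / q - n|) ∧
      (1 / 2 : ℝ) ≤ Real.sin (Real.pi * l * 2 ^ j / q) ^ 2 := by
  have hq0 : (0 : ℝ) < q := by exact_mod_cast (by omega : 0 < q)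
  have hdist := one_div_le_abs_div_sub_round (by omega) hl
  push_cast at hdist
  obtain ⟨j, hjN, hj⟩ := exists_le_abs_pow_two_mul_sub_round (n := Nat.log 2 q) (x := l / q) <| by
    have hlt : (q : ℝ) < 2 ^ (Nat.log 2 q + 1) := by
      exact_mod_cast Nat.lt_pow_succ_log_self one_lt_two q
    calc (1 / 2 : ℝ) < 2 ^ Nat.log 2 q * (1 / q) := by
          rw [pow_succ] at hlt; field_simp; linarith
      _ ≤ _ := by gcongr
  rw [show (2 : ℝ) ^ j * (l / q) = l * 2 ^ j / q by ring] at hj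
  refine ⟨j, ?_, fun n => hj.trans (round_le _ n), ?_⟩
  · calc (j : ℝ) ≤ Nat.log 2 q := by exact_mod_cast hjN
      _ ≤ Real.logb 2 q := by exact_mod_cast Real.natLog_le_logb q 2
  · simpa only [mul_div_assoc, mul_assoc] using half_le_sin_pi_mul_sq hj

theorem stmt_7 (q : ℕ) (hq : 3 ≤ q) (hodd : Odd q) (l : ℤ) (hl : ¬ ((q : ℤ) ∣ l)) :
    ∃ j : ℕ, (j : ℝ) ≤ Real.logb 2 q ∧
      (∀ n : ℤ, (1 / 4 : ℝ) ≤ |(l : ℝ) * 2 ^ j / q - n|) ∧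
      (1 / 2 : ℝ) ≤ Real.sin (Real.pi * l * 2 ^ j / q) ^ 2 :=
  stmt_7_general q hq l hl
end

section
/- Let t ∈ (1/2, 1) satisfy t^t(1-t)^{1-t} < 1/√3. Then there exist a real q > 1 and a constant c > 0 such that, with p the conjugate exponent (1/p + 1/q = 1), √3^{1/p} · (t^q + (1-t)^q)^{1/q} ≤ 2^{-c}. -/
/-!
With `q = 1 + s` and `1/p = s/q`, the left-hand side is `h(s)^(1/q)` where
`h(s) = √3^s (t^(1+s) + (1-t)^(1+s))`. Since `h(0) = 1` and
`h'(0) = log (√3 t^t (1-t)^(1-t)) < 0`, some `s > 0` has `h(s) < 1`,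
and `2^(-c)` with `c = -log₂ h(s)^(1/q)` is exactly the left-hand side.
-/

open Real

theorem HasDerivAt.exists_gt_lt_of_neg {f : ℝ → ℝ} {f' x : ℝ} (hf : HasDerivAt f f' x)
    (hf' : f' < 0) : ∃ y, x < y ∧ f y < f x := by
  obtain ⟨y, hslope, hxy⟩ :=
    ((hf.hasDerivWithinAt.liminf_right_slope_le hf').and_eventually self_mem_nhdsWithin).exists
  refine ⟨y, hxy, ?_⟩
  rw [slope_def_field, div_neg_iff] at hslope
  rcases hslope with ⟨-, hyx⟩ | ⟨hdiff, -⟩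
  · linarith
  · linarith

theorem hasDerivAt_rpow_mul_rpow_one_add_add {a u v : ℝ} (ha : 0 < a) (hu : 0 < u) (hv : 0 < v) :
    HasDerivAt (fun s : ℝ ↦ a ^ s * (u ^ (1 + s) + v ^ (1 + s)))
      (log a * (u + v) + (u * log u + v * log v)) 0 := by
  have hadd : HasDerivAt (fun s : ℝ ↦ 1 + s) 1 0 := (hasDerivAt_id (0 : ℝ)).const_add 1
  refine ((hasStrictDerivAt_const_rpow ha 0).hasDerivAt.mul
    ((hadd.const_rpow hu).add (hadd.const_rpow hv))).congr_deriv ?_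
  simp only [Pi.add_apply, rpow_zero, add_zero, rpow_one]
  ring

theorem exists_pos_rpow_mul_rpow_one_add_add_lt_one {a u v : ℝ} (ha : 0 < a) (hu : 0 < u)
    (hv : 0 < v) (huv : u + v = 1) (h : a * u ^ u * v ^ v < 1) :
    ∃ s : ℝ, 0 < s ∧ a ^ s * (u ^ (1 + s) + v ^ (1 + s)) < 1 := by
  have hlog : log a + (u * log u + v * log v) < 0 := by
    have := log_neg (by positivity) h
    rw [log_mul (by positivity) (by positivity), log_mul ha.ne' (by positivity),
      log_rpow hu, log_rpow hv] at this
    linarith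
  obtain ⟨s, hs, hlt⟩ := (hasDerivAt_rpow_mul_rpow_one_add_add ha hu hv).exists_gt_lt_of_neg
    (by rwa [huv, mul_one])
  refine ⟨s, hs, ?_⟩
  simpa [huv] using hlt

theorem rpow_one_div_mul_rpow_one_div_eq_of_isConj {a S s p : ℝ} (ha : 0 ≤ a) (hS : 0 ≤ S)
    (hs : 0 < s) (hp : 1 / p + 1 / (1 + s) = 1) :
    a ^ (1 / p) * S ^ (1 / (1 + s)) = (a ^ s * S) ^ (1 / (1 + s)) := by
  have hp' : 1 / p = s * (1 / (1 + s)) := by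
    field_simp at hp ⊢
    linarith
  rw [hp', rpow_mul ha, mul_rpow (by positivity) hS]

theorem exists_pos_rpow_neg_eq {b x : ℝ} (hb : 1 < b) (hx₀ : 0 < x) (hx₁ : x < 1) :
    ∃ c : ℝ, 0 < c ∧ b ^ (-c) = x :=
  ⟨-logb b x, neg_pos.2 (logb_neg hb hx₀ hx₁), by
    rw [neg_neg, rpow_logb (by linarith) hb.ne' hx₀]⟩

theorem stmt_14 (t : ℝ) (ht : t ∈ Set.Ioo (1/2 : ℝ) 1)
    (hlt : t ^ t * (1 - t) ^ (1 - t) < 1 / Real.sqrt 3) :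
    ∃ q c : ℝ, 1 < q ∧ 0 < c ∧
      ∀ p : ℝ, 1 / p + 1 / q = 1 →
        Real.sqrt 3 ^ (1 / p) * (t ^ q + (1 - t) ^ q) ^ (1 / q) ≤ 2 ^ (-c) := by
  obtain ⟨ht₀, ht₁⟩ := ht
  have hsqrt3 : 0 < √3 := by positivity
  have hprod : √3 * t ^ t * (1 - t) ^ (1 - t) < 1 := by
    rw [mul_assoc, ← lt_div_iff₀' hsqrt3]
    simpa only [one_div] using hlt
  obtain ⟨s, hs, hx₁⟩ := exists_pos_rpow_mul_rpow_one_add_add_lt_one hsqrt3 (by linarith)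
    (by linarith) (add_sub_cancel t 1) hprod
  set x := √3 ^ s * (t ^ (1 + s) + (1 - t) ^ (1 + s))
  have hx₀ : 0 < x := by positivity
  obtain ⟨c, hc, hcx⟩ := exists_pos_rpow_neg_eq one_lt_two (rpow_pos_of_pos hx₀ (1 / (1 + s)))
    (rpow_lt_one hx₀.le hx₁ (by positivity))
  refine ⟨1 + s, c, by linarith, hc, fun p hp ↦ ?_⟩
  rw [rpow_one_div_mul_rpow_one_div_eq_of_isConj hsqrt3.le (by positivity) hs hp, hcx]
end

section
/- Let N = 2^m, 0 < ρ < 1, and μ(n) = ρ^{m-ℓ(n)}(1-ρ)^{ℓ(n)} with ℓ(n) the binary digit sum of n ∈ {0,...,N-1}. Let q ≥ 1 be an integer. Then ∑_{n < N, q | n} μ(n) = 1/q + (1/q)∑_{λ=1}^{q-1} ∏_{j=0}^{m-1} (ρ + (1-ρ) e^{2πi λ 2ʲ / q}). -/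
/-!
Detect `q ∣ n` by orthogonality of roots of unity: with `ζ = e^{2πi/q}`,
`(1/q) ∑_{l<q} ζ^{ln}` is `1` if `q ∣ n` and `0` otherwise. After exchanging the sums, the inner
sum is the generating function `∑_{n<2^m} μ(n) z^n` at `z = ζ^l`, which factors over the binary
digits of `n` as `∏_{j<m} (ρ + (1-ρ) z^{2^j})`; the term `l = 0` contributes `1/q`.
-/

open Finset

namespace Nat

theorem digits_sum_le_of_lt_pow {b m n : ℕ} (hb : 1 < b) (hn : n < b ^ m) :
    (digits b n).sum ≤ (b - 1) * m := by
  have hlen : (digits b n).length ≤ m := (digits_length_le_iff hb n).mpr hn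
  calc (digits b n).sum ≤ (digits b n).length • (b - 1) :=
        List.sum_le_card_nsmul _ _ fun d hd => Nat.le_sub_one_of_lt (digits_lt_base hb hd)
    _ ≤ (b - 1) * m := by rw [smul_eq_mul, mul_comm]; exact Nat.mul_le_mul_left _ hlen

theorem digits_sum_add_pow_mul {b m n d : ℕ} (hb : 1 < b) (hn : n < b ^ m) (hd : 0 < d) :
    (digits b (n + b ^ m * d)).sum = (digits b n).sum + (digits b d).sum := by
  have hlen : (digits b n).length ≤ m := (digits_length_le_iff hb n).mpr hn
  have h := digits_append_zeroes_append_digits (k := m - (digits b n).length) (n := n) hb hd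
  rw [Nat.add_sub_cancel' hlen] at h
  simp [← h]

end Nat

theorem sum_range_two_pow_digits_sum {R : Type*} [CommSemiring R] (a b z : R) (m : ℕ) :
    ∑ n ∈ range (2 ^ m), a ^ (m - (Nat.digits 2 n).sum) * b ^ (Nat.digits 2 n).sum * z ^ n
      = ∏ j ∈ range m, (a + b * z ^ 2 ^ j) := by
  induction m with
  | zero => simp
  | succ m ih =>
    have low : ∀ n ∈ range (2 ^ m),
        a ^ (m + 1 - (Nat.digits 2 n).sum) * b ^ (Nat.digits 2 n).sum * z ^ n
          = a * (a ^ (m - (Nat.digits 2 n).sum) * b ^ (Nat.digits 2 n).sum * z ^ n) := by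
      intro n hn
      have := Nat.digits_sum_le_of_lt_pow (m := m) one_lt_two (mem_range.mp hn)
      rw [Nat.sub_add_comm (by omega), pow_succ]
      ring
    have high : ∀ n ∈ range (2 ^ m),
        a ^ (m + 1 - (Nat.digits 2 (2 ^ m + n)).sum) * b ^ (Nat.digits 2 (2 ^ m + n)).sum
            * z ^ (2 ^ m + n)
          = b * z ^ 2 ^ m * (a ^ (m - (Nat.digits 2 n).sum) * b ^ (Nat.digits 2 n).sum * z ^ n) := by
      intro n hn
      have hsum := Nat.digits_sum_add_pow_mul (d := 1) one_lt_two (mem_range.mp hn) one_pos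
      rw [mul_one, add_comm n, Nat.digits_of_lt 2 1 one_ne_zero one_lt_two] at hsum
      rw [hsum, List.sum_singleton, Nat.add_sub_add_right, pow_succ, pow_add]
      ring
    rw [pow_succ, mul_two, sum_range_add, sum_congr rfl low, sum_congr rfl high, ← mul_sum,
      ← mul_sum, ih, prod_range_succ]
    ring

theorem IsPrimitiveRoot.sum_pow_mul_eq_ite {K : Type*} [CommRing K] [IsDomain K] {ζ : K} {q : ℕ}
    (hζ : IsPrimitiveRoot ζ q) (n : ℕ) :
    ∑ l ∈ range q, ζ ^ (l * n) = if q ∣ n then (q : K) else 0 := by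
  simp_rw [mul_comm _ n, pow_mul]
  split_ifs with hdvd
  · simp [(hζ.pow_eq_one_iff_dvd n).mpr hdvd]
  · have hζn : ζ ^ n ≠ 1 := mt (hζ.pow_eq_one_iff_dvd n).mp hdvd
    have hζnq : (ζ ^ n) ^ q = 1 := by rw [← pow_mul, mul_comm, pow_mul, hζ.pow_eq_one, one_pow]
    have := geom_sum_mul (ζ ^ n) q
    rw [hζnq, sub_self] at this
    exact (mul_eq_zero.mp this).resolve_right (sub_ne_zero.mpr hζn)

theorem IsPrimitiveRoot.sum_filter_dvd {K : Type*} [Field K] {ζ : K} {q : ℕ}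
    (hζ : IsPrimitiveRoot ζ q) (hq : (q : K) ≠ 0) (s : Finset ℕ) (f : ℕ → K) :
    ∑ n ∈ s with q ∣ n, f n = 1 / q * ∑ l ∈ range q, ∑ n ∈ s, f n * (ζ ^ l) ^ n := by
  have indicator : ∀ n,
      (if q ∣ n then f n else 0) = f n * (1 / q * ∑ l ∈ range q, ζ ^ (l * n)) := by
    intro n
    rw [hζ.sum_pow_mul_eq_ite]
    split_ifs
    · field_simp
    · simp
  simp_rw [sum_filter, indicator, mul_sum, ← pow_mul]
  rw [sum_comm]
  exact sum_congr rfl fun _ _ => sum_congr rfl fun _ _ => by ring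

theorem stmt_16_general (m : ℕ) (ρ : ℝ)
    (q : ℕ) (hq : 1 ≤ q) :
    ∑ n ∈ (Finset.range (2 ^ m)).filter (fun n => q ∣ n),
        ((ρ ^ (m - (Nat.digits 2 n).sum) * (1 - ρ) ^ (Nat.digits 2 n).sum : ℝ) : ℂ)
      = 1 / q + (1 / q) * ∑ l ∈ Finset.Ico 1 q, ∏ j ∈ Finset.range m,
          ((ρ : ℂ) + (1 - ρ) * Complex.exp (2 * Real.pi * Complex.I * l * 2 ^ j / q)) := by
  set ζ := Complex.exp (2 * Real.pi * Complex.I / q)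
  have hζ : IsPrimitiveRoot ζ q := Complex.isPrimitiveRoot_exp q (by omega)
  have hq0 : (q : ℂ) ≠ 0 := Nat.cast_ne_zero.mpr (by omega)
  have hexp : ∀ l j : ℕ,
      Complex.exp (2 * Real.pi * Complex.I * l * 2 ^ j / q) = (ζ ^ l) ^ 2 ^ j := by
    intro l j
    rw [← pow_mul, ← Complex.exp_nat_mul]
    push_cast
    ring_nf
  push_cast
  rw [hζ.sum_filter_dvd hq0, sum_range_eq_add_Ico _ (by omega)]
  simp_rw [sum_range_two_pow_digits_sum, hexp]
  simp [mul_add]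

theorem stmt_16 (m : ℕ) (hm : 0 < m) (ρ : ℝ) (hρ : 0 < ρ) (hρ1 : ρ < 1)
    (q : ℕ) (hq : 1 ≤ q) :
    ∑ n ∈ (Finset.range (2 ^ m)).filter (fun n => q ∣ n),
        ((ρ ^ (m - (Nat.digits 2 n).sum) * (1 - ρ) ^ (Nat.digits 2 n).sum : ℝ) : ℂ)
      = 1 / q + (1 / q) * ∑ l ∈ Finset.Ico 1 q, ∏ j ∈ Finset.range m,
          ((ρ : ℂ) + (1 - ρ) * Complex.exp (2 * Real.pi * Complex.I * l * 2 ^ j / q)) :=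
  stmt_16_general m ρ q hq
end
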